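/- (Deterministic core of Theorem 1, single mode.) Let A be a real n×n matrix, B a real n×p matrix, u : ℝ → ℝᵖ, and let ξ, ξ̃ : ℝ → ℝⁿ be differentiable with ξ'(t) = Aξ(t) + Bu(t) and ξ̃'(t) = Aξ̃(t) + Bu(t) for all t. Let M be a real symmetric positive definite n×n matrix and μ ∈ ℝ with AᵀM + MA + μM ⪯ 0, and suppose (ξ(0) − ξ̃(0))ᵀ M (ξ(0) − ξ̃(0)) ≤ r for some r ≥ 0. Let T > 0, γ ≥ 0, and let s : ℝ → ℝⁿ satisfy (s(t) − ξ̃(t))ᵀ M (s(t) − ξ̃(t)) e^{μt} ≤ γ for all t ∈ [0, T]. Let K be a finite index set and for each k ∈ K let a_k ∈ ℝⁿ, c_k ∈ ℝᵖ, b_k ∈ ℝ, τ_k ∈ [0, T], and z_k > 0 with z_k² a_k a_kᵀ ⪯ M. If for every k ∈ K and every t ∈ [τ_k, T] the nominal trajectory satisfies the tightened constraint a_kᵀ ξ(t) + c_kᵀ u(t) < b_k − (√γ + √r) e^{−μt/2} / z_k, then for every k ∈ K and every t ∈ [τ_k, T] the perturbed trajectory satisfies a_kᵀ s(t) + c_kᵀ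 u(t) < b_k. -/

import Mathlib

/-!
The error e = ξ - η solves e' = A e, and the LMI Aᵀ M + M A + μ M ⪯ 0 says exactly that
V(t) = eᵀ M e · e^{μt} has non-positive derivative, so V(t) ≤ V(0) ≤ r. Since z² a aᵀ ⪯ M, any
w with wᵀ M w · e^{μt} ≤ ρ has |aᵀ w| ≤ √ρ e^{-μt/2} / z. Applying this to s - η (with ρ = γ) and
to ξ - η (with ρ = r) bounds aᵀ s - aᵀ ξ by the tightening margin.
-/

open Matrix

theorem HasDerivAt.dotProduct {ι : Type*} [Fintype ι] {f g : ℝ → ι → ℝ} {f' g' : ι → ℝ}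
    {t : ℝ} (hf : HasDerivAt f f' t) (hg : HasDerivAt g g' t) :
    HasDerivAt (fun s => f s ⬝ᵥ g s) (f' ⬝ᵥ g t + f t ⬝ᵥ g') t := by
  have := HasDerivAt.fun_sum (u := Finset.univ) fun i _ =>
    (hasDerivAt_pi.1 hf i).fun_mul (hasDerivAt_pi.1 hg i)
  rw [_root_.dotProduct, _root_.dotProduct, ← Finset.sum_add_distrib]
  exact this

theorem HasDerivAt.mulVec {ι κ : Type*} [Fintype κ] (M : Matrix ι κ ℝ) {f : ℝ → κ → ℝ}
    {f' : κ → ℝ} {t : ℝ} (hf : HasDerivAt f f' t) :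
    HasDerivAt (fun s => M *ᵥ f s) (M *ᵥ f') t :=
  hasDerivAt_pi.2 fun i =>
    ((hasDerivAt_const t (M i)).dotProduct hf).congr_deriv <| by
      rw [zero_dotProduct, zero_add]; rfl

theorem hasDerivAt_dotProduct_mulVec_self {ι : Type*} [Fintype ι] (M : Matrix ι ι ℝ)
    {f : ℝ → ι → ℝ} {f' : ι → ℝ} {t : ℝ} (hf : HasDerivAt f f' t) :
    HasDerivAt (fun s => f s ⬝ᵥ M *ᵥ f s) (f' ⬝ᵥ M *ᵥ f t + f t ⬝ᵥ M *ᵥ f') t :=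
  hf.dotProduct (hf.mulVec M)

theorem antitone_dotProduct_mulVec_mul_exp {ι : Type*} [Fintype ι] {A M : Matrix ι ι ℝ} {μ : ℝ}
    (hLMI : ∀ v : ι → ℝ, v ⬝ᵥ (Aᵀ * M + M * A + μ • M) *ᵥ v ≤ 0) {e : ℝ → ι → ℝ}
    (he : ∀ t, HasDerivAt e (A *ᵥ e t) t) :
    Antitone fun t => (e t ⬝ᵥ M *ᵥ e t) * Real.exp (μ * t) := by
  have hV : ∀ t, HasDerivAt (fun t => (e t ⬝ᵥ M *ᵥ e t) * Real.exp (μ * t))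
      ((e t ⬝ᵥ (Aᵀ * M + M * A + μ • M) *ᵥ e t) * Real.exp (μ * t)) t := by
    intro t
    refine ((hasDerivAt_dotProduct_mulVec_self M (he t)).fun_mul
      ((hasDerivAt_id t).const_mul μ).exp).congr_deriv ?_
    simp only [add_mulVec, ← mulVec_mulVec, smul_mulVec, dotProduct_add, dotProduct_smul,
      dotProduct_mulVec _ Aᵀ, vecMul_transpose, smul_eq_mul, id_eq]
    ring
  exact antitone_of_deriv_nonpos (fun t => (hV t).differentiableAt) fun t =>
    (hV t).deriv ▸ mul_nonpos_of_nonpos_of_nonneg (hLMI _) (Real.exp_nonneg _)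

theorem sq_mul_dotProduct_le {ι : Type*} [Fintype ι] {M : Matrix ι ι ℝ} {a v : ι → ℝ} {z : ℝ}
    (h : 0 ≤ v ⬝ᵥ (M - z ^ 2 • vecMulVec a a) *ᵥ v) :
    (z * (a ⬝ᵥ v)) ^ 2 ≤ v ⬝ᵥ M *ᵥ v := by
  rw [sub_mulVec, dotProduct_sub, smul_mulVec, dotProduct_smul, vecMulVec_mulVec,
    dotProduct_smul, dotProduct_comm v a] at h
  simp only [MulOpposite.smul_eq_mul_unop, MulOpposite.unop_op, smul_eq_mul] at h
  nlinarith

theorem abs_dotProduct_le_of_mul_exp_le {ι : Type*} [Fintype ι] {M : Matrix ι ι ℝ}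
    {a v : ι → ℝ} {z μ t ρ : ℝ} (hz : 0 < z)
    (hdom : 0 ≤ v ⬝ᵥ (M - z ^ 2 • vecMulVec a a) *ᵥ v)
    (hv : (v ⬝ᵥ M *ᵥ v) * Real.exp (μ * t) ≤ ρ) :
    |a ⬝ᵥ v| ≤ √ρ * Real.exp (-μ * t / 2) / z := by
  have hsq : (z * (a ⬝ᵥ v)) ^ 2 ≤ ρ * Real.exp (-μ * t) := by
    rw [neg_mul, Real.exp_neg, ← div_eq_mul_inv, le_div_iff₀ (Real.exp_pos _)]
    exact (mul_le_mul_of_nonneg_right (sq_mul_dotProduct_le hdom) (Real.exp_nonneg _)).trans hv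
  have := Real.abs_le_sqrt hsq
  rw [Real.sqrt_mul' _ (Real.exp_nonneg _), ← Real.exp_half, abs_mul, abs_of_pos hz] at this
  rwa [le_div_iff₀ hz, mul_comm]

theorem stmt_9_general {n p : ℕ} (A : Matrix (Fin n) (Fin n) ℝ) (B : Matrix (Fin n) (Fin p) ℝ)
    (u : ℝ → Fin p → ℝ) (ξ η : ℝ → Fin n → ℝ)
    (hξ : ∀ t : ℝ, HasDerivAt ξ (A.mulVec (ξ t) + B.mulVec (u t)) t)
    (hη : ∀ t : ℝ, HasDerivAt η (A.mulVec (η t) + B.mulVec (u t)) t)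
    (M : Matrix (Fin n) (Fin n) ℝ) (μ : ℝ)
    (hLMI : ∀ v : Fin n → ℝ, v ⬝ᵥ (Aᵀ * M + M * A + μ • M).mulVec v ≤ 0)
    (r : ℝ)
    (h0 : (ξ 0 - η 0) ⬝ᵥ M.mulVec (ξ 0 - η 0) ≤ r)
    (T : ℝ) (γ : ℝ)
    (s : ℝ → Fin n → ℝ)
    (hs : ∀ t ∈ Set.Icc (0 : ℝ) T,
      ((s t - η t) ⬝ᵥ M.mulVec (s t - η t)) * Real.exp (μ * t) ≤ γ)
    (K : Type*)
    (a : K → Fin n → ℝ) (c : K → Fin p → ℝ) (b : K → ℝ) (τ : K → ℝ) (z : K → ℝ)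
    (hτ : ∀ k, τ k ∈ Set.Icc (0 : ℝ) T) (hz : ∀ k, 0 < z k)
    (hdom : ∀ (k : K) (v : Fin n → ℝ),
      0 ≤ v ⬝ᵥ (M - (z k) ^ 2 • vecMulVec (a k) (a k)).mulVec v)
    (hnom : ∀ (k : K), ∀ t ∈ Set.Icc (τ k) T,
      a k ⬝ᵥ ξ t + c k ⬝ᵥ u t
        < b k - (Real.sqrt γ + Real.sqrt r) * Real.exp (-μ * t / 2) / z k) :
    ∀ (k : K), ∀ t ∈ Set.Icc (τ k) T, a k ⬝ᵥ s t + c k ⬝ᵥ u t < b k := by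
  intro k t ht
  have ht0 : 0 ≤ t := (hτ k).1.trans ht.1
  have herr : ∀ t, HasDerivAt (ξ - η) (A *ᵥ (ξ - η) t) t := fun t =>
    ((hξ t).sub (hη t)).congr_deriv (by simp only [Pi.sub_apply, mulVec_sub]; abel)
  have hdecay : ((ξ t - η t) ⬝ᵥ M *ᵥ (ξ t - η t)) * Real.exp (μ * t) ≤ r := by
    simpa using (antitone_dotProduct_mulVec_mul_exp hLMI herr ht0).trans (by simpa using h0)
  have hsη := abs_dotProduct_le_of_mul_exp_le (hz k) (hdom k _) (hs t ⟨ht0, ht.2⟩)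
  have hξη := abs_dotProduct_le_of_mul_exp_le (hz k) (hdom k _) hdecay
  have hnom := hnom k t ht
  rw [dotProduct_sub] at hsη hξη
  rw [add_mul, add_div] at hnom
  linarith [le_abs_self (a k ⬝ᵥ s t - a k ⬝ᵥ η t), neg_abs_le (a k ⬝ᵥ ξ t - a k ⬝ᵥ η t)]

/-- Deterministic core of Theorem 1 (single mode): if the nominal trajectory ξ satisfies the
tightened constraints a_kᵀ ξ(t) + c_kᵀ u(t) < b_k − (√γ + √r) e^{−μt/2} / z_k on [τ_k, T],
then any realization s staying within the bisimulation bound γ of a perturbed nominal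
trajectory η (started in the r-ellipsoid around ξ(0)) satisfies the original constraints
a_kᵀ s(t) + c_kᵀ u(t) < b_k on [τ_k, T]. -/
theorem stmt_9 {n p : ℕ} (A : Matrix (Fin n) (Fin n) ℝ) (B : Matrix (Fin n) (Fin p) ℝ)
    (u : ℝ → Fin p → ℝ) (ξ η : ℝ → Fin n → ℝ)
    (hξ : ∀ t : ℝ, HasDerivAt ξ (A.mulVec (ξ t) + B.mulVec (u t)) t)
    (hη : ∀ t : ℝ, HasDerivAt η (A.mulVec (η t) + B.mulVec (u t)) t)
    (M : Matrix (Fin n) (Fin n) ℝ) (hMsym : M = Mᵀ)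
    (hMpd : ∀ v : Fin n → ℝ, v ≠ 0 → 0 < v ⬝ᵥ M.mulVec v) (μ : ℝ)
    (hLMI : ∀ v : Fin n → ℝ, v ⬝ᵥ (Aᵀ * M + M * A + μ • M).mulVec v ≤ 0)
    (r : ℝ) (hr : 0 ≤ r)
    (h0 : (ξ 0 - η 0) ⬝ᵥ M.mulVec (ξ 0 - η 0) ≤ r)
    (T : ℝ) (hT : 0 < T) (γ : ℝ) (hγ : 0 ≤ γ)
    (s : ℝ → Fin n → ℝ)
    (hs : ∀ t ∈ Set.Icc (0 : ℝ) T,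
      ((s t - η t) ⬝ᵥ M.mulVec (s t - η t)) * Real.exp (μ * t) ≤ γ)
    (K : Type*) [Fintype K]
    (a : K → Fin n → ℝ) (c : K → Fin p → ℝ) (b : K → ℝ) (τ : K → ℝ) (z : K → ℝ)
    (hτ : ∀ k, τ k ∈ Set.Icc (0 : ℝ) T) (hz : ∀ k, 0 < z k)
    (hdom : ∀ (k : K) (v : Fin n → ℝ),
      0 ≤ v ⬝ᵥ (M - (z k) ^ 2 • vecMulVec (a k) (a k)).mulVec v)
    (hnom : ∀ (k : K), ∀ t ∈ Set.Icc (τ k) T,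
      a k ⬝ᵥ ξ t + c k ⬝ᵥ u t
        < b k - (Real.sqrt γ + Real.sqrt r) * Real.exp (-μ * t / 2) / z k) :
    ∀ (k : K), ∀ t ∈ Set.Icc (τ k) T, a k ⬝ᵥ s t + c k ⬝ᵥ u t < b k :=
  stmt_9_general A B u ξ η hξ hη M μ hLMI r h0 T γ s hs K a c b τ z hτ hz hdom hnom
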